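/- Let S be a positive integer, a ∈ ℝ^S with a_s > 0 for all s, b ∈ ℝ^S with b_s ≥ 0 for all s, c ∈ ℝ^S, and ρ > 0. Define γ* : ℝ → ℝ by letting γ*(α) be the unique real number satisfying Σ_{s=1}^S a_s · max(−b_s α + γ*(α) + c_s, 0) = ρ. Then γ* is monotone nondecreasing and concave on ℝ. -/

import Mathlib

/-!
With `F(α, γ) = ∑ₛ aₛ (−bₛ α + γ + cₛ)₊`, the number `γ*(α)` is the largest `γ` with
`F(α, γ) ≤ ρ`: since `ρ > 0`, some term of `F(α, γ*(α))` is active, so `F(α, ·)` strictly increases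
beyond `γ*(α)`. Hence the hypograph of `γ*` is the sublevel set `{F ≤ ρ}`, which is convex because
`F` is jointly convex, so `γ*` is concave; and `γ*` is monotone because `F` is antitone in `α`.
-/

open Set

lemma convexOn_finset_sum {E ι : Type*} [AddCommGroup E] [Module ℝ E] {s : Set E} (hs : Convex ℝ s)
    (t : Finset ι) {f : ι → E → ℝ} (hf : ∀ i ∈ t, ConvexOn ℝ s (f i)) :
    ConvexOn ℝ s fun x => ∑ i ∈ t, f i x := by
  induction t using Finset.cons_induction with
  | empty => simpa using convexOn_const 0 hs
  | cons i t _ ih =>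
    simp only [Finset.sum_cons]
    exact (hf i (Finset.mem_cons_self i t)).add (ih fun j hj => hf j (Finset.mem_cons_of_mem hj))

section
variable {E : Type*} {F : E × ℝ → ℝ} {ρ : ℝ} {g : E → ℝ}

lemma monotone_of_isGreatest_sublevel [Preorder E] (hF : ∀ γ, Antitone fun α => F (α, γ))
    (hg : ∀ α, IsGreatest {γ | F (α, γ) ≤ ρ} (g α)) : Monotone g :=
  fun x y hxy => (hg y).2 ((hF (g x) hxy).trans (hg x).1)

lemma concaveOn_of_isGreatest_sublevel [AddCommGroup E] [Module ℝ E] (hF : ConvexOn ℝ univ F)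
    (hg : ∀ α, IsGreatest {γ | F (α, γ) ≤ ρ} (g α)) : ConcaveOn ℝ univ g := by
  refine ⟨convex_univ, fun x _ y _ p q hp hq hpq => (hg _).2 ?_⟩
  calc F (p • x + q • y, p • g x + q • g y)
      = F (p • (x, g x) + q • (y, g y)) := rfl
    _ ≤ p • F (x, g x) + q • F (y, g y) := hF.2 (mem_univ _) (mem_univ _) hp hq hpq
    _ ≤ p • ρ + q • ρ := by gcongr; exacts [(hg x).1, (hg y).1]
    _ = ρ := by rw [← add_smul, hpq, one_smul]
end

def posPartSum {ι : Type*} [Fintype ι] (a b c : ι → ℝ) (x : ℝ × ℝ) : ℝ :=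
  ∑ s, a s * max (-(b s) * x.1 + x.2 + c s) 0

section
variable {ι : Type*} [Fintype ι] {a b c : ι → ℝ}

lemma convexOn_posPartSum (ha : ∀ s, 0 ≤ a s) : ConvexOn ℝ univ (posPartSum a b c) := by
  refine convexOn_finset_sum convex_univ _ fun s _ => ?_
  have hlin := (((-b s) • LinearMap.fst ℝ ℝ ℝ + LinearMap.snd ℝ ℝ ℝ).convexOn convex_univ).add_const (c s)
  exact (hlin.sup (convexOn_const 0 convex_univ)).smul (ha s)

lemma antitone_posPartSum (ha : ∀ s, 0 ≤ a s) (hb : ∀ s, 0 ≤ b s) (γ : ℝ) :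
    Antitone fun α => posPartSum a b c (α, γ) := fun x y hxy =>
  Finset.sum_le_sum fun s _ => mul_le_mul_of_nonneg_left
    (max_le_max (by nlinarith [mul_le_mul_of_nonneg_left hxy (hb s)]) le_rfl) (ha s)

lemma posPartSum_lt_of_lt (ha : ∀ s, 0 < a s) {α γ γ' : ℝ} (h₀ : 0 < posPartSum a b c (α, γ))
    (hγ : γ < γ') : posPartSum a b c (α, γ) < posPartSum a b c (α, γ') := by
  obtain ⟨s₀, -, hs₀⟩ := Finset.exists_lt_of_sum_lt (by simpa [posPartSum] using h₀ :
    ∑ s, (0 : ℝ) < ∑ s, a s * max (-(b s) * α + γ + c s) 0)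
  have hpos : 0 < -(b s₀) * α + γ + c s₀ := by
    by_contra! h
    rw [max_eq_right h, mul_zero] at hs₀
    exact hs₀.false
  refine Finset.sum_lt_sum (fun s _ => ?_) ⟨s₀, Finset.mem_univ _, ?_⟩
  · exact mul_le_mul_of_nonneg_left (max_le_max (by linarith) le_rfl) (ha s).le
  · refine mul_lt_mul_of_pos_left ?_ (ha s₀)
    rw [max_eq_left hpos.le, max_eq_left (by linarith)]
    linarith

lemma isGreatest_sublevel_posPartSum (ha : ∀ s, 0 < a s) {ρ α γ : ℝ} (hρ : 0 < ρ)
    (h : posPartSum a b c (α, γ) = ρ) : IsGreatest {γ' | posPartSum a b c (α, γ') ≤ ρ} γ := by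
  refine ⟨h.le, fun γ' (hγ' : posPartSum a b c (α, γ') ≤ ρ) => ?_⟩
  by_contra! hlt
  have := posPartSum_lt_of_lt ha (h ▸ hρ) hlt
  linarith
end

theorem stmt8_general (S : ℕ)
    (a : Fin S → ℝ) (ha : ∀ s, 0 < a s)
    (b : Fin S → ℝ) (hb : ∀ s, 0 ≤ b s)
    (c : Fin S → ℝ) (ρ : ℝ) (hρ : 0 < ρ)
    (γstar : ℝ → ℝ)
    (hγ : ∀ α : ℝ, ∑ s, a s * max (-(b s) * α + γstar α + c s) 0 = ρ) :
    Monotone γstar ∧ ConcaveOn ℝ Set.univ γstar := by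
  have hsublevel : ∀ α, IsGreatest {γ | posPartSum a b c (α, γ) ≤ ρ} (γstar α) :=
    fun α => isGreatest_sublevel_posPartSum ha hρ (hγ α)
  have ha₀ : ∀ s, 0 ≤ a s := fun s => (ha s).le
  exact ⟨monotone_of_isGreatest_sublevel (antitone_posPartSum ha₀ hb) hsublevel,
    concaveOn_of_isGreatest_sublevel (convexOn_posPartSum ha₀) hsublevel⟩

/-- The solution path `γ*` of the nonlinear equation `a^T [−bα + γe + c]_+ = ρ`
is monotone nondecreasing and concave in `α`. -/
theorem stmt8 (S : ℕ) (hS : 0 < S)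
    (a : Fin S → ℝ) (ha : ∀ s, 0 < a s)
    (b : Fin S → ℝ) (hb : ∀ s, 0 ≤ b s)
    (c : Fin S → ℝ) (ρ : ℝ) (hρ : 0 < ρ)
    (γstar : ℝ → ℝ)
    (hγ : ∀ α : ℝ, ∑ s, a s * max (-(b s) * α + γstar α + c s) 0 = ρ) :
    Monotone γstar ∧ ConcaveOn ℝ Set.univ γstar :=
  stmt8_general S a ha b hb c ρ hρ γstar hγ
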